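/- arXiv:math/0505342 — 4 statements merged into one kernel-verified Lean document; each statement's English description precedes it below -/
import Mathlib

section
/- The multiplicative semigroup of 2×2 integer matrices with determinant 1 and all entries nonnegative is freely generated (as a semigroup, together with the identity) by the two matrices T₁ = [[1,1],[0,1]] and T₂ = [[1,0],[1,1]]; that is, every such matrix other than the identity is a product of T₁'s and T₂'s in a unique way. -/
/-- The generator matrices T₁ = [[1,1],[0,1]] and T₂ = [[1,0],[1,1]]. -/
def NovT (i : Bool) : Matrix (Fin 2) (Fin 2) ℤ :=
  if i then !![1, 1; 0, 1] else !![1, 0; 1, 1]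

def invT (i : Bool) : Matrix (Fin 2) (Fin 2) ℤ :=
  if i then !![1, -1; 0, 1] else !![1, 0; -1, 1]
lemma invT_mul (i : Bool) : invT i * NovT i = 1 := by
  cases i <;> simp [invT, NovT, Matrix.mul_fin_two, Matrix.one_fin_two]
lemma novT_pos (i : Bool) (a b : Fin 2) : 0 ≤ NovT i a b := by
  cases i <;> fin_cases a <;> fin_cases b <;> simp [NovT]
lemma prod_pos (L : List Bool) (a b : Fin 2) : 0 ≤ (L.map NovT).prod a b := by
  induction L generalizing a b with
  | nil => simp [Matrix.one_apply]; split <;> norm_num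
  | cons i t ih =>
    simp only [List.map_cons, List.prod_cons, Matrix.mul_apply, Fin.sum_univ_two]
    have := novT_pos i a 0
    have := novT_pos i a 1
    have := ih 0 b
    have := ih 1 b
    positivity
lemma prod_det (L : List Bool) : ((L.map NovT).prod).det = 1 := by
  induction L with
  | nil => simp
  | cons i t ih =>
    simp only [List.map_cons, List.prod_cons, Matrix.det_mul, ih, mul_one]
    cases i <;> simp [NovT, Matrix.det_fin_two_of]
lemma head_det (A B : Matrix (Fin 2) (Fin 2) ℤ) (hA : A.det = 1)
    (hAp : ∀ i j, 0 ≤ A i j) (hBp : ∀ i j, 0 ≤ B i j)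
    (h : NovT true * A = NovT false * B) : False := by
  have e00 := congrFun (congrFun h 0) 0
  have e01 := congrFun (congrFun h 0) 1
  have e10 := congrFun (congrFun h 1) 0
  have e11 := congrFun (congrFun h 1) 1
  simp [NovT, Matrix.mul_apply, Fin.sum_univ_two] at e00 e01 e10 e11
  have hp : A 0 0 = 0 := by have := hAp 0 0; have := hBp 1 0; omega
  have hq : A 0 1 = 0 := by have := hAp 0 1; have := hBp 1 1; omega
  rw [Matrix.det_fin_two, hp, hq] at hA
  simp at hA
lemma prod_ne_one (L : List Bool) (h : L ≠ []) : (L.map NovT).prod ≠ 1 := by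
  match L with
  | i :: t =>
    intro he
    simp only [List.map_cons, List.prod_cons] at he
    have h2 : (t.map NovT).prod = invT i := by
      calc (t.map NovT).prod = invT i * (NovT i * (t.map NovT).prod) := by
            rw [← mul_assoc, invT_mul, one_mul]
        _ = invT i := by rw [he, mul_one]
    have h3 := prod_pos t
    cases i
    · have := h3 1 0; rw [h2] at this; simp [invT] at this
    · have := h3 0 1; rw [h2] at this; simp [invT] at this
lemma prod_cancel (i : Bool) (A B : Matrix (Fin 2) (Fin 2) ℤ) (h : NovT i * A = NovT i * B) :
    A = B := by
  calc A = invT i * (NovT i * A) := by rw [← mul_assoc, invT_mul, one_mul]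
    _ = invT i * (NovT i * B) := by rw [h]
    _ = B := by rw [← mul_assoc, invT_mul, one_mul]
lemma prod_inj : ∀ (L1 L2 : List Bool), (L1.map NovT).prod = (L2.map NovT).prod → L1 = L2 := by
  intro L1
  induction L1 with
  | nil =>
    intro L2 h
    by_contra hne
    exact prod_ne_one L2 (Ne.symm hne) (by rw [← h]; simp)
  | cons i t ih =>
    intro L2 h
    match L2 with
    | [] => exact absurd (by rw [h]; simp) (prod_ne_one (i :: t) (by simp))
    | j :: t2 =>
      simp only [List.map_cons, List.prod_cons] at h
      have hij : i = j := by
        by_contra hij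
        cases i <;> cases j <;> simp_all
        · exact head_det _ _ (prod_det t2) (prod_pos t2) (prod_pos t) h.symm
        · exact head_det _ _ (prod_det t) (prod_pos t) (prod_pos t2) h
      subst hij
      rw [ih t2 (prod_cancel i _ _ h)]
lemma exists_fact : ∀ (n : ℕ) (M : Matrix (Fin 2) (Fin 2) ℤ),
    (M 0 0 + M 0 1 + M 1 0 + M 1 1).toNat ≤ n → M.det = 1 → (∀ i j, 0 ≤ M i j) →
    ∃ L : List Bool, (L.map NovT).prod = M := by
  intro n
  induction n with
  | zero =>
    intro M hs hd hp
    exfalso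
    have h00 := hp 0 0; have h01 := hp 0 1; have h10 := hp 1 0; have h11 := hp 1 1
    have : M 0 0 = 0 ∧ M 0 1 = 0 ∧ M 1 0 = 0 ∧ M 1 1 = 0 := by omega
    rw [Matrix.det_fin_two, this.1, this.2.1] at hd
    simp at hd
  | succ n ih =>
    intro M hs hd hp
    by_cases hone : M = 1
    · exact ⟨[], by simp [hone]⟩
    set a := M 0 0 with ha; set b := M 0 1 with hb
    set c := M 1 0 with hc; set d := M 1 1 with hdd
    have heta : M = !![a, b; c, d] := Matrix.eta_fin_two M
    have hdet2 : a * d - b * c = 1 := by rw [Matrix.det_fin_two] at hd; linarith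
    have h00 : 0 ≤ a := hp 0 0
    have h01 : 0 ≤ b := hp 0 1
    have h10 : 0 ≤ c := hp 1 0
    have h11 : 0 ≤ d := hp 1 1
    have hcase : (c ≤ a ∧ d ≤ b) ∨ (a ≤ c ∧ b ≤ d) := by
      by_contra hcon
      push_neg at hcon
      obtain ⟨h1, h2⟩ := hcon
      rcases lt_trichotomy a c with h | h | h
      · have hdb := h2 h.le
        have k1 : 0 ≤ a * (b - 1 - d) := mul_nonneg h00 (by omega)
        have k2 : 0 ≤ b * (c - a - 1) := mul_nonneg h01 (by omega)
        nlinarith [k1, k2]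
      · have := h1 h.ge
        have := h2 h.le
        omega
      · have hbd := h1 h.le
        have k1 : 0 ≤ d * (a - c - 1) := mul_nonneg (by omega) (by omega)
        have k2 : 0 ≤ c * (d - b - 1) := mul_nonneg h10 (by omega)
        have hc0 : c = 0 := by nlinarith
        have hd1 : d = 1 := by nlinarith
        have hb0 : b = 0 := by omega
        have ha1 : a = 1 := by rw [hb0, hc0, hd1] at hdet2; linarith
        exact hone (by rw [heta, ha1, hb0, hc0, hd1, ← Matrix.one_fin_two])
    rcases hcase with ⟨h1, h2⟩ | ⟨h1, h2⟩
    · -- M = T₁ * N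
      set N : Matrix (Fin 2) (Fin 2) ℤ := !![a - c, b - d; c, d] with hN
      have hMN : M = NovT true * N := by
        rw [heta, hN]
        simp [NovT, Matrix.mul_fin_two]
      have hcd : 1 ≤ c + d := by
        by_contra h
        have : c = 0 ∧ d = 0 := by omega
        rw [this.1, this.2] at hdet2; simp at hdet2
      obtain ⟨L, hL⟩ := ih N (by simp [hN]; omega)
        (by rw [hN, Matrix.det_fin_two_of]; linarith)
        (by intro i j; fin_cases i <;> fin_cases j <;> simp [hN] <;> omega)
      exact ⟨true :: L, by simp only [List.map_cons, List.prod_cons, hL, hMN]⟩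
    · -- M = T₂ * N
      set N : Matrix (Fin 2) (Fin 2) ℤ := !![a, b; c - a, d - b] with hN
      have hMN : M = NovT false * N := by
        rw [heta, hN]
        simp [NovT, Matrix.mul_fin_two]
      have hab : 1 ≤ a + b := by
        by_contra h
        have : a = 0 ∧ b = 0 := by omega
        rw [this.1, this.2] at hdet2; simp at hdet2
      obtain ⟨L, hL⟩ := ih N (by simp [hN]; omega)
        (by rw [hN, Matrix.det_fin_two_of]; linarith)
        (by intro i j; fin_cases i <;> fin_cases j <;> simp [hN] <;> omega)
      exact ⟨false :: L, by simp only [List.map_cons, List.prod_cons, hL, hMN]⟩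

/-- The multiplicative semigroup of 2×2 integer matrices with determinant 1 and all
entries nonnegative is freely generated by T₁ and T₂: every such matrix other than the
identity is a product of T₁'s and T₂'s in a unique way. -/
theorem stmt0 (M : Matrix (Fin 2) (Fin 2) ℤ)
    (hdet : M.det = 1) (hpos : ∀ i j, 0 ≤ M i j) (hne : M ≠ 1) :
    ∃! L : List Bool, L ≠ [] ∧ (L.map NovT).prod = M := by
  obtain ⟨L, hL⟩ := exists_fact (M 0 0 + M 0 1 + M 1 0 + M 1 1).toNat M le_rfl hdet hpos
  have hLne : L ≠ [] := by
    intro h; rw [h] at hL; simp at hL; exact hne hL.symm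
  exact ⟨L, ⟨hLne, hL⟩, fun L' ⟨_, hL'⟩ => prod_inj L' L (by rw [hL, hL'])⟩
end

section
/- The abelianization homomorphism from the semigroup of positive automorphisms of F₂ generated by T̂₁ and T̂₂ to SL₂(ℤ) sends T̂₁ to [[1,1],[0,1]] and T̂₂ to [[1,0],[1,1]], and is injective on this semigroup. -/
noncomputable def That (i : Bool) : Monoid.End (FreeGroup Bool) :=
  if i then
    FreeGroup.lift (fun x => if x then FreeGroup.of true * FreeGroup.of false
      else FreeGroup.of false)
  else
    FreeGroup.lift (fun x => if x then FreeGroup.of true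
      else FreeGroup.of false * FreeGroup.of true)

/-- Exponent sum of the generator `x` in an element of the free group
(the abelianization coordinates). -/
noncomputable def expSum (x : Bool) : FreeGroup Bool →* Multiplicative ℤ :=
  FreeGroup.lift (fun y => if y = x then Multiplicative.ofAdd (1 : ℤ) else 1)

/-- The matrix of the endomorphism induced on the abelianization ℤ² of F₂:
row `i`, column `j` is the exponent sum of generator `j` in the image of generator `i`.
(Generator 0 is `a = of true`, generator 1 is `b = of false`.) -/
noncomputable def abMat (f : Monoid.End (FreeGroup Bool)) : Matrix (Fin 2) (Fin 2) ℤ :=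
  Matrix.of fun i j =>
    Multiplicative.toAdd (expSum (j = 0) (f (FreeGroup.of (i = 0))))

/-! Transposing `abMat` turns it into a monoid homomorphism sending `T̂₁, T̂₂` to the
Stern–Brocot matrices `!![1, 0; 1, 1]` and `!![1, 1; 0, 1]`. A product of these matrices applied
to `(1, 1)` is a positive vector whose first coordinate is smaller exactly when the leftmost factor
is `!![1, 0; 1, 1]`, and equal only for the empty product; so the word can be read off letter by
letter and the monoid generated by the two matrices is free. -/

open Matrix Function

@[simp]
lemma expSum_of (x y : Bool) :
    expSum x (FreeGroup.of y) = if y = x then Multiplicative.ofAdd 1 else 1 :=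
  FreeGroup.lift_apply_of

@[simp]
lemma That_true_apply_of (x : Bool) :
    That true (FreeGroup.of x) =
      if x then FreeGroup.of true * FreeGroup.of false else FreeGroup.of false :=
  FreeGroup.lift_apply_of

@[simp]
lemma That_false_apply_of (x : Bool) :
    That false (FreeGroup.of x) =
      if x then FreeGroup.of true else FreeGroup.of false * FreeGroup.of true :=
  FreeGroup.lift_apply_of

lemma abMat_That_true : abMat (That true) = !![1, 1; 0, 1] := by
  ext i j
  fin_cases i <;> fin_cases j <;> simp [abMat]

lemma abMat_That_false : abMat (That false) = !![1, 0; 1, 1] := by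
  ext i j
  fin_cases i <;> fin_cases j <;> simp [abMat]

lemma abMat_one : abMat 1 = 1 := by
  ext i j
  fin_cases i <;> fin_cases j <;> simp [abMat]

lemma toAdd_apply_eq_expSum (φ : FreeGroup Bool →* Multiplicative ℤ) (w : FreeGroup Bool) :
    (φ w).toAdd = (expSum true w).toAdd * (φ (FreeGroup.of true)).toAdd
      + (expSum false w).toAdd * (φ (FreeGroup.of false)).toAdd := by
  induction w using FreeGroup.induction_on with
  | C1 => simp
  | of x => cases x <;> simp
  | inv_of x ih => simp only [map_inv, toAdd_inv] at *; linarith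
  | mul x y ihx ihy => simp only [map_mul, toAdd_mul] at *; linarith

lemma abMat_mul (f g : Monoid.End (FreeGroup Bool)) : abMat (f * g) = abMat g * abMat f := by
  ext i j
  simp only [abMat, of_apply, mul_apply, Fin.sum_univ_two]
  exact toAdd_apply_eq_expSum ((expSum _).comp f) _

noncomputable def abMatTransposeHom :
    Monoid.End (FreeGroup Bool) →* Matrix (Fin 2) (Fin 2) ℤ where
  toFun f := (abMat f)ᵀ
  map_one' := by rw [abMat_one, transpose_one]
  map_mul' f g := by rw [abMat_mul, transpose_mul]

def sternBrocotGen (b : Bool) : Matrix (Fin 2) (Fin 2) ℤ :=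
  if b then !![1, 0; 1, 1] else !![1, 1; 0, 1]

lemma sternBrocotGen_mulVec (b : Bool) (x : Fin 2 → ℤ) :
    sternBrocotGen b *ᵥ x = if b then ![x 0, x 0 + x 1] else ![x 0 + x 1, x 1] := by
  ext i
  cases b <;> fin_cases i <;> simp [sternBrocotGen, mulVec, dotProduct, Fin.sum_univ_two]

lemma sternBrocotGen_mulVec_injective (b : Bool) : Injective (sternBrocotGen b *ᵥ ·) := by
  intro x y h
  simp only [sternBrocotGen_mulVec, funext_iff, Fin.forall_fin_two] at h
  ext i
  cases b <;> fin_cases i <;> simp at h ⊢ <;> omega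

section positive

variable {x : Fin 2 → ℤ}

lemma sternBrocotGen_mulVec_pos (b : Bool) (hx : ∀ i, 0 < x i) (i : Fin 2) :
    0 < (sternBrocotGen b *ᵥ x) i := by
  have := hx 0; have := hx 1
  rw [sternBrocotGen_mulVec]; cases b <;> fin_cases i <;> simp <;> omega

lemma sternBrocotGen_mulVec_lt_iff (b : Bool) (hx : ∀ i, 0 < x i) :
    (sternBrocotGen b *ᵥ x) 0 < (sternBrocotGen b *ᵥ x) 1 ↔ b = true := by
  have := hx 0; have := hx 1
  rw [sternBrocotGen_mulVec]; cases b <;> simp <;> omega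

lemma sternBrocotGen_mulVec_ne (b : Bool) (hx : ∀ i, 0 < x i) :
    (sternBrocotGen b *ᵥ x) 0 ≠ (sternBrocotGen b *ᵥ x) 1 := by
  have := hx 0; have := hx 1
  rw [sternBrocotGen_mulVec]; cases b <;> simp <;> omega

end positive

lemma lift_sternBrocotGen_of_mul_mulVec (b : Bool) (w : FreeMonoid Bool) (x : Fin 2 → ℤ) :
    FreeMonoid.lift sternBrocotGen (FreeMonoid.of b * w) *ᵥ x =
      sternBrocotGen b *ᵥ (FreeMonoid.lift sternBrocotGen w *ᵥ x) := by
  rw [map_mul, FreeMonoid.lift_eval_of, mulVec_mulVec]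

lemma lift_sternBrocotGen_mulVec_pos (w : FreeMonoid Bool) (i : Fin 2) :
    0 < (FreeMonoid.lift sternBrocotGen w *ᵥ ![1, 1]) i := by
  induction w using FreeMonoid.inductionOn' generalizing i with
  | one => fin_cases i <;> simp
  | of_mul b w ih =>
    rw [lift_sternBrocotGen_of_mul_mulVec]
    exact sternBrocotGen_mulVec_pos b ih i

lemma lift_sternBrocotGen_of_mul_mulVec_ne (b : Bool) (w : FreeMonoid Bool) :
    FreeMonoid.lift sternBrocotGen (FreeMonoid.of b * w) *ᵥ ![1, 1] ≠ ![1, 1] := by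
  intro h
  apply sternBrocotGen_mulVec_ne b (lift_sternBrocotGen_mulVec_pos w)
  rw [← lift_sternBrocotGen_of_mul_mulVec, h]
  simp

theorem injective_lift_sternBrocotGen_mulVec :
    Injective fun w : FreeMonoid Bool => FreeMonoid.lift sternBrocotGen w *ᵥ ![1, 1] := by
  intro u v h
  dsimp only at h
  induction u using FreeMonoid.inductionOn' generalizing v with
  | one =>
    cases v with
    | one => rfl
    | of_mul b v =>
      rw [map_one, one_mulVec] at h
      exact absurd h.symm (lift_sternBrocotGen_of_mul_mulVec_ne b v)
  | of_mul a u ih =>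
    cases v with
    | one =>
      rw [map_one, one_mulVec] at h
      exact absurd h (lift_sternBrocotGen_of_mul_mulVec_ne a u)
    | of_mul b v =>
      simp only [lift_sternBrocotGen_of_mul_mulVec] at h
      obtain rfl : a = b := by
        rw [Bool.eq_iff_iff, ← sternBrocotGen_mulVec_lt_iff a (lift_sternBrocotGen_mulVec_pos u),
          ← sternBrocotGen_mulVec_lt_iff b (lift_sternBrocotGen_mulVec_pos v), h]
      rw [ih (sternBrocotGen_mulVec_injective a h)]

theorem injective_lift_sternBrocotGen : Injective (FreeMonoid.lift sternBrocotGen) :=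
  Injective.of_comp (f := (· *ᵥ ![1, 1])) injective_lift_sternBrocotGen_mulVec

lemma abMatTransposeHom_comp_lift_That :
    abMatTransposeHom.comp (FreeMonoid.lift That) = FreeMonoid.lift sternBrocotGen :=
  FreeMonoid.hom_eq fun b => by
    ext i j
    cases b <;> fin_cases i <;> fin_cases j <;>
      simp [abMatTransposeHom, abMat_That_true, abMat_That_false, sternBrocotGen]

/-- The abelianization homomorphism sends T̂₁ to [[1,1],[0,1]] and T̂₂ to [[1,0],[1,1]],
is multiplicative (with the row-vector convention, composition `f * g = f ∘ g` of
endomorphisms corresponds to the matrix product `abMat g * abMat f`), and is injective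
on the semigroup generated by T̂₁ and T̂₂. -/
theorem stmt3 :
    abMat (That true) = !![1, 1; 0, 1] ∧
    abMat (That false) = !![1, 0; 1, 1] ∧
    (∀ f g : Monoid.End (FreeGroup Bool), abMat (f * g) = abMat g * abMat f) ∧
    Set.InjOn abMat (Submonoid.closure {That true, That false} : Set (Monoid.End (FreeGroup Bool))) := by
  refine ⟨abMat_That_true, abMat_That_false, abMat_mul, ?_⟩
  have hclosure :
      Submonoid.closure {That true, That false} = MonoidHom.mrange (FreeMonoid.lift That) := by
    rw [FreeMonoid.mrange_lift, Bool.range_eq, Set.pair_comm]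
  have hinj : Injective (abMatTransposeHom ∘ FreeMonoid.lift That) := by
    rw [← MonoidHom.coe_comp, abMatTransposeHom_comp_lift_That]
    exact injective_lift_sternBrocotGen
  rw [hclosure, MonoidHom.coe_mrange]
  exact Set.InjOn.of_comp (g := transpose) hinj.injOn_range
end

section
/- Let h⁰, h¹, h² ∈ H₁(T², ℤ) ≅ ℤ² be the homology classes of the three streets, with h¹ = (u, v) and h² = (−w, −y) where (u,v), (w,y) are the minimal pairs defined by 0 < u|a| − v|b| < m and 0 < y|b| − w|a| < m. Then h¹ and −h² = (w, y) form a basis of ℤ², i.e. u·y − v·w = ±1 with u·y − v·w = 1. -/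
/-!
Put D = uy − vw. Since D·a = y(ua − vb) + v(yb − wa) > 0, D is positive, and D = 1 as soon as
the half-open parallelogram spanned by (u, v) and (w, y) contains no nonzero lattice point.
A lattice point (p, q) = s(u, v) + t(w, y) with s, t ∈ [0, 1) has gap
pa − qb = s(ua − vb) − t(yb − wa), strictly between −(yb − wa) and ua − vb, and nonzero unless
(p, q) = 0 because a/b is irrational. If the gap is positive, the minimality of (u, v) gives
p ≥ u, hence q > v, and the minimality of (w, y) applied to (p − u, q − v) gives p − u ≥ w,
contradicting p − u < w. A negative gap is excluded in the same way, using (p − w, max(q − y, 0)).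
-/

theorem exists_residues_dvd_of_one_lt_det {u v w y D : ℤ} (hdet : u * y - v * w = D)
    (hD : 1 < D) :
    ∃ S T : ℤ, 0 ≤ S ∧ S < D ∧ 0 ≤ T ∧ T < D ∧ (S ≠ 0 ∨ T ≠ 0) ∧
      D ∣ S * u + T * w ∧ D ∣ S * v + T * y := by
  obtain ⟨S, T, hST, hdvd₁, hdvd₂⟩ :
      ∃ S T : ℤ, ¬(D ∣ S ∧ D ∣ T) ∧ D ∣ S * u + T * w ∧ D ∣ S * v + T * y := by
    -- The rows (y, -v) and (-w, u) of the adjugate solve both congruences; they cannot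
    -- both vanish mod D, as otherwise D² ∣ D.
    by_cases hyv : D ∣ y ∧ D ∣ v
    · refine ⟨-w, u, fun hwu => ?_, ⟨0, by ring⟩, ⟨1, by rw [← hdet]; ring⟩⟩
      have hsq : D * D ∣ u * y - v * w :=
        dvd_sub (mul_dvd_mul hwu.2 hyv.1) (mul_dvd_mul hyv.2 (dvd_neg.1 hwu.1))
      rw [hdet] at hsq
      nlinarith [Int.le_of_dvd (by omega) hsq]
    · exact ⟨y, -v, by rwa [dvd_neg], ⟨1, by rw [← hdet]; ring⟩, ⟨0, by ring⟩⟩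
  have hD₀ : D ≠ 0 := by omega
  have hmod (x y : ℤ) (h : D ∣ S * x + T * y) : D ∣ S % D * x + T % D * y :=
    Int.modEq_zero_iff_dvd.1 <| (((Int.mod_modEq S D).mul_right x).add
      ((Int.mod_modEq T D).mul_right y)).trans (Int.modEq_zero_iff_dvd.2 h)
  refine ⟨S % D, T % D, Int.emod_nonneg _ hD₀, Int.emod_lt_of_pos _ (by omega),
    Int.emod_nonneg _ hD₀, Int.emod_lt_of_pos _ (by omega), ?_, hmod _ _ hdvd₁, hmod _ _ hdvd₂⟩
  by_contra! h
  exact hST ⟨Int.dvd_of_emod_eq_zero h.1, Int.dvd_of_emod_eq_zero h.2⟩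

theorem det_eq_one_of_parallelogram_free {u v w y : ℕ} (hD : 0 < (u : ℤ) * y - v * w)
    (hfree : ∀ (p q : ℕ) (s t : ℝ), 0 ≤ s → s < 1 → 0 ≤ t → t < 1 →
      (p : ℝ) = s * u + t * w → (q : ℝ) = s * v + t * y → s = 0 ∧ t = 0) :
    (u : ℤ) * y - v * w = 1 := by
  set D : ℤ := u * y - v * w with hdet
  by_contra hne
  obtain ⟨S, T, hS₀, hSD, hT₀, hTD, hST, ⟨p, hp⟩, ⟨q, hq⟩⟩ :=
    exists_residues_dvd_of_one_lt_det hdet.symm (by omega)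
  lift p to ℕ using nonneg_of_mul_nonneg_right (hp ▸ by positivity) hD
  lift q to ℕ using nonneg_of_mul_nonneg_right (hq ▸ by positivity) hD
  have hDR : (0 : ℝ) < D := by exact_mod_cast hD
  have hpR : (D : ℝ) * p = S * u + T * w := by exact_mod_cast hp.symm
  have hqR : (D : ℝ) * q = S * v + T * y := by exact_mod_cast hq.symm
  obtain ⟨hS, hT⟩ := hfree p q (S / D) (T / D) (by positivity)
    ((div_lt_one hDR).2 (by exact_mod_cast hSD)) (by positivity)
    ((div_lt_one hDR).2 (by exact_mod_cast hTD))
    (by field_simp; linarith) (by field_simp; linarith)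
  rw [div_eq_zero_iff, or_iff_left hDR.ne'] at hS hT
  exact hST.elim (· (by exact_mod_cast hS)) (· (by exact_mod_cast hT))

section
variable {a b m : ℝ} {u v w y p q : ℕ} {s t : ℝ}

theorem det_pos_of_gaps_pos (ha : 0 < a) (hy : 0 < y) (hα : 0 < u * a - v * b)
    (hβ : 0 < y * b - w * a) : 0 < (u : ℤ) * y - v * w := by
  have hdet : (((u : ℤ) * y - v * w : ℤ) : ℝ) * a =
      y * (u * a - v * b) + v * (y * b - w * a) := by
    push_cast; ring
  have hyR : (0 : ℝ) < y := by exact_mod_cast hy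
  have : (0 : ℝ) < ((u : ℤ) * y - v * w : ℤ) :=
    pos_of_mul_pos_left (hdet ▸ add_pos_of_pos_of_nonneg (mul_pos hyR hα) (by positivity)) ha.le
  exact_mod_cast this

theorem gap_eq_of_mem_parallelogram (hp : (p : ℝ) = s * u + t * w)
    (hq : (q : ℝ) = s * v + t * y) :
    p * a - q * b = s * (u * a - v * b) - t * (y * b - w * a) := by
  rw [hp, hq]; ring

theorem false_of_mem_parallelogram_of_gap_pos (ha : 0 < a) (hb : 0 < b) (hu : 0 < u)
    (hα : 0 < u * a - v * b) (hαm : u * a - v * b < m) (hβ : 0 < y * b - w * a)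
    (huvmin : ∀ u' v' : ℕ, 0 < u' → 0 < u' * a - v' * b → u' * a - v' * b < m →
      (toLex (u, v) : ℕ ×ₗ ℕ) ≤ toLex (u', v'))
    (hwymin : ∀ w' y' : ℕ, 0 < y' → 0 < y' * b - w' * a → y' * b - w' * a < m →
      (toLex (w, y) : ℕ ×ₗ ℕ) ≤ toLex (w', y'))
    (hs₁ : s < 1) (ht₀ : 0 ≤ t) (ht₁ : t < 1)
    (hp : (p : ℝ) = s * u + t * w) (hq : (q : ℝ) = s * v + t * y)
    (hgap : 0 < p * a - q * b) : False := by
  have hgap_eq := gap_eq_of_mem_parallelogram (a := a) (b := b) hp hq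
  have huR : (0 : ℝ) < u := by exact_mod_cast hu
  have hgap_lt : (p : ℝ) * a - q * b < u * a - v * b := by nlinarith
  have hs : 0 < s := by nlinarith
  have hp₀ : 0 < p := by exact_mod_cast (show (0 : ℝ) < p by rw [hp]; positivity)
  have hup : u ≤ p := (Prod.Lex.toLex_le_toLex'.1 (huvmin p q hp₀ hgap (hgap_lt.trans hαm))).1
  have hupR : (u : ℝ) ≤ p := by exact_mod_cast hup
  have hvq : v < q := by exact_mod_cast (show (v : ℝ) < q by nlinarith)
  have hwp : w ≤ p - u := by
    refine (Prod.Lex.toLex_le_toLex'.1 (hwymin (p - u) (q - v) (by omega) ?_ ?_)).1 <;>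
      push_cast [hup, hvq.le] <;> linarith
  have : ((p - u : ℕ) : ℝ) < w := by push_cast [hup]; nlinarith
  exact this.not_ge (by exact_mod_cast hwp)

theorem false_of_mem_parallelogram_of_gap_neg (ha : 0 < a) (hb : 0 < b) (hu : 0 < u)
    (hy : 0 < y) (hα : 0 < u * a - v * b) (hβ : 0 < y * b - w * a) (hβm : y * b - w * a < m)
    (huvmin : ∀ u' v' : ℕ, 0 < u' → 0 < u' * a - v' * b → u' * a - v' * b < m →
      (toLex (u, v) : ℕ ×ₗ ℕ) ≤ toLex (u', v'))
    (hwymin : ∀ w' y' : ℕ, 0 < y' → 0 < y' * b - w' * a → y' * b - w' * a < m →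
      (toLex (w, y) : ℕ ×ₗ ℕ) ≤ toLex (w', y'))
    (hs₀ : 0 ≤ s) (hs₁ : s < 1) (ht₁ : t < 1)
    (hp : (p : ℝ) = s * u + t * w) (hq : (q : ℝ) = s * v + t * y)
    (hgap : p * a - q * b < 0) : False := by
  have hgap_eq := gap_eq_of_mem_parallelogram (a := a) (b := b) hp hq
  have huR : (0 : ℝ) < u := by exact_mod_cast hu
  have hyR : (0 : ℝ) < y := by exact_mod_cast hy
  have hgap_lt : (q : ℝ) * b - p * a < y * b - w * a := by nlinarith
  have ht : 0 < t := by nlinarith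
  have hq₀ : 0 < q := by exact_mod_cast (show (0 : ℝ) < q by rw [hq]; positivity)
  rcases Prod.Lex.toLex_le_toLex.1 (hwymin p q hq₀ (by linarith) (hgap_lt.trans hβm)) with
    hwp | ⟨hwp, hyq⟩
  · have hwpR : (w : ℝ) < p := by exact_mod_cast hwp
    obtain ⟨hpos, hlt⟩ : 0 < ((p - w : ℕ) : ℝ) * a - ((q - y : ℕ) : ℝ) * b ∧
        ((p - w : ℕ) : ℝ) * a - ((q - y : ℕ) : ℝ) * b < m := by
      -- `q - y` truncates: for q < y the pair is (p - w, 0).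
      rw [Nat.cast_sub hwp.le]
      rcases le_or_gt y q with hyq | hqy
      · rw [Nat.cast_sub hyq]; constructor <;> linarith
      · have hqyR : (q : ℝ) < y := by exact_mod_cast hqy
        rw [Nat.sub_eq_zero_of_le hqy.le, Nat.cast_zero]; constructor <;> nlinarith
    have hup : u ≤ p - w := (Prod.Lex.toLex_le_toLex'.1 (huvmin _ _ (by omega) hpos hlt)).1
    have : ((p - w : ℕ) : ℝ) < u := by push_cast [hwp.le]; nlinarith
    exact this.not_ge (by exact_mod_cast hup)
  · have hwpR : (w : ℝ) = p := by exact_mod_cast hwp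
    have hyqR : (y : ℝ) ≤ q := by exact_mod_cast hyq
    nlinarith

theorem eq_zero_of_mem_parallelogram_of_gap_eq_zero (hb : 0 < b) (hirr : Irrational (a / b))
    (hu : 0 < u) (hy : 0 < y) (hs₀ : 0 ≤ s) (ht₀ : 0 ≤ t)
    (hp : (p : ℝ) = s * u + t * w) (hq : (q : ℝ) = s * v + t * y)
    (hgap : p * a - q * b = 0) : s = 0 ∧ t = 0 := by
  have hp₀ : p = 0 := by
    by_contra hp₀
    have hpR : (p : ℝ) ≠ 0 := by exact_mod_cast hp₀
    exact hirr ⟨q / p, by push_cast; field_simp; linarith⟩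
  have hq₀ : q = 0 := by
    subst hp₀
    push_cast at hgap
    exact_mod_cast (mul_eq_zero.1 (show (q : ℝ) * b = 0 by linarith)).resolve_right hb.ne'
  subst hp₀ hq₀
  push_cast at hp hq
  have huR : (0 : ℝ) < u := by exact_mod_cast hu
  have hyR : (0 : ℝ) < y := by exact_mod_cast hy
  constructor <;> nlinarith [mul_nonneg hs₀ (Nat.cast_nonneg (α := ℝ) v),
    mul_nonneg ht₀ (Nat.cast_nonneg (α := ℝ) w)]

theorem eq_zero_of_mem_parallelogram (ha : 0 < a) (hb : 0 < b) (hirr : Irrational (a / b))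
    (hu : 0 < u) (hy : 0 < y) (hα : 0 < u * a - v * b) (hαm : u * a - v * b < m)
    (hβ : 0 < y * b - w * a) (hβm : y * b - w * a < m)
    (huvmin : ∀ u' v' : ℕ, 0 < u' → 0 < u' * a - v' * b → u' * a - v' * b < m →
      (toLex (u, v) : ℕ ×ₗ ℕ) ≤ toLex (u', v'))
    (hwymin : ∀ w' y' : ℕ, 0 < y' → 0 < y' * b - w' * a → y' * b - w' * a < m →
      (toLex (w, y) : ℕ ×ₗ ℕ) ≤ toLex (w', y'))
    (hs₀ : 0 ≤ s) (hs₁ : s < 1) (ht₀ : 0 ≤ t) (ht₁ : t < 1)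
    (hp : (p : ℝ) = s * u + t * w) (hq : (q : ℝ) = s * v + t * y) : s = 0 ∧ t = 0 := by
  rcases lt_trichotomy ((p : ℝ) * a - q * b) 0 with hgap | hgap | hgap
  · exact (false_of_mem_parallelogram_of_gap_neg ha hb hu hy hα hβ hβm huvmin hwymin
      hs₀ hs₁ ht₁ hp hq hgap).elim
  · exact eq_zero_of_mem_parallelogram_of_gap_eq_zero hb hirr hu hy hs₀ ht₀ hp hq hgap
  · exact (false_of_mem_parallelogram_of_gap_pos ha hb hu hα hαm hβ huvmin hwymin
      hs₁ ht₀ ht₁ hp hq hgap).elim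

end

theorem stmt7_general (a b m : ℝ) (ha : 0 < a) (hb : 0 < b)
    (hirr : Irrational (a / b)) (u v w y : ℕ)
    (hu : 0 < u) (huv : 0 < u * a - v * b ∧ u * a - v * b < m)
    (huvmin : ∀ u' v' : ℕ, 0 < u' → 0 < u' * a - v' * b → u' * a - v' * b < m →
      (toLex (u, v) : ℕ ×ₗ ℕ) ≤ toLex (u', v'))
    (hy : 0 < y) (hwy : 0 < y * b - w * a ∧ y * b - w * a < m)
    (hwymin : ∀ w' y' : ℕ, 0 < y' → 0 < y' * b - w' * a → y' * b - w' * a < m →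
      (toLex (w, y) : ℕ ×ₗ ℕ) ≤ toLex (w', y')) :
    (u : ℤ) * y - v * w = 1 :=
  det_eq_one_of_parallelogram_free (det_pos_of_gaps_pos ha hy huv.1 hwy.1)
    fun _ _ _ _ hs₀ hs₁ ht₀ ht₁ hp hq ↦ eq_zero_of_mem_parallelogram ha hb hirr hu hy huv.1 huv.2
      hwy.1 hwy.2 huvmin hwymin hs₀ hs₁ ht₀ ht₁ hp hq

/-- The homology classes h¹ = (u, v) and −h² = (w, y) of the streets form a basis of ℤ²:
the determinant u·y − v·w equals 1. -/
theorem stmt7 (a b m : ℝ) (ha : 0 < a) (hb : 0 < b) (hm : 0 < m)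
    (hm' : m < a + b) (hirr : Irrational (a / b)) (u v w y : ℕ)
    (hu : 0 < u) (huv : 0 < u * a - v * b ∧ u * a - v * b < m)
    (huvmin : ∀ u' v' : ℕ, 0 < u' → 0 < u' * a - v' * b → u' * a - v' * b < m →
      (toLex (u, v) : ℕ ×ₗ ℕ) ≤ toLex (u', v'))
    (hy : 0 < y) (hwy : 0 < y * b - w * a ∧ y * b - w * a < m)
    (hwymin : ∀ w' y' : ℕ, 0 < y' → 0 < y' * b - w' * a → y' * b - w' * a < m →
      (toLex (w, y) : ℕ ×ₗ ℕ) ≤ toLex (w', y')) :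
    (u : ℤ) * y - v * w = 1 :=
  stmt7_general a b m ha hb hirr u v w y hu huv huvmin hy hwy hwymin
end

section
/- For every pair of coprime positive integers k, l, there is exactly one positive word in the free group F₂ on generators a', b' with abelianized image k·[a'] + l·[b'], up to cyclic permutation; equivalently, the number of distinct positive words of length k+l containing k letters a' and l letters b' whose cyclic equivalence class is the class realized by a simple closed transversal curve is exactly k+l. -/
/-!
The rotations of a word `w` of length `n` are the orbit of `w` under the shift
`l ↦ l.rotate 1`, which has size `p`, the minimal period of `w`. Since `w.rotate n = w`,
`p ∣ n`, and `w.rotate p = w` forces `w` to be the `(n / p)`-th power of its prefix of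
length `p`. Hence `n / p` divides the number of occurrences of every letter, so for
coprime letter counts `n / p = 1`, i.e. all `n` rotations are distinct.
-/

namespace List

variable {α : Type*}

theorem eq_flatten_replicate_of_append_comm {u v : List α} {m : ℕ}
    (hcomm : u ++ v = v ++ u) (hlen : v.length = m * u.length) :
    v = (replicate m u).flatten := by
  induction m generalizing v with
  | zero => simpa using hlen
  | succ m ih =>
    have hle : u.length ≤ v.length := by rw [hlen]; exact Nat.le_mul_of_pos_left _ m.succ_pos
    have hu : u = v.take u.length := by
      have h := congrArg (take u.length) hcomm
      rwa [take_left, take_append_of_le_length hle] at h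
    obtain ⟨d, rfl⟩ : ∃ d, v = u ++ d := ⟨v.drop u.length, by
      conv_lhs => rw [← take_append_drop u.length v, ← hu]⟩
    have hd : u ++ d = d ++ u := append_cancel_left (hcomm.trans (append_assoc u d u))
    rw [ih hd (by rw [length_append] at hlen; linarith), replicate_succ, flatten_cons]

theorem eq_flatten_replicate_of_rotate_eq_self {l : List α} {p : ℕ}
    (hp : p ∣ l.length) (hrot : l.rotate p = l) :
    l = (replicate (l.length / p) (l.take p)).flatten := by
  rcases eq_or_ne l [] with rfl | hl
  · simp
  have hpl : p ≤ l.length := Nat.le_of_dvd (length_pos_iff.mpr hl) hp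
  have hswap : l.drop p ++ l.take p = l := by rwa [← rotate_eq_drop_append_take hpl]
  apply eq_flatten_replicate_of_append_comm
  · calc l.take p ++ l = l.take p ++ (l.drop p ++ l.take p) := by rw [hswap]
      _ = l ++ l.take p := by rw [← append_assoc, take_append_drop]
  · rw [length_take_of_le hpl, Nat.div_mul_cancel hp]

theorem iterate_rotate_one (l : List α) (i : ℕ) :
    (fun x : List α => x.rotate 1)^[i] l = l.rotate i := by
  induction i with
  | zero => simp
  | succ i ih => rw [Function.iterate_succ_apply', ih, rotate_rotate]

theorem minimalPeriod_rotate_one_dvd_length (l : List α) :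
    Function.minimalPeriod (fun x : List α => x.rotate 1) l ∣ l.length :=
  Function.IsPeriodicPt.minimalPeriod_dvd <| by
    rw [Function.IsPeriodicPt, Function.IsFixedPt, iterate_rotate_one, rotate_length]

theorem length_div_minimalPeriod_rotate_one_dvd_count [BEq α] (l : List α) (a : α) :
    l.length / Function.minimalPeriod (fun x : List α => x.rotate 1) l ∣ l.count a := by
  set p := Function.minimalPeriod (fun x : List α => x.rotate 1) l
  have hrot : l.rotate p = l := by
    rw [← iterate_rotate_one]; exact Function.iterate_minimalPeriod
  refine ⟨(l.take p).count a, ?_⟩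
  conv_lhs =>
    rw [eq_flatten_replicate_of_rotate_eq_self (minimalPeriod_rotate_one_dvd_length l) hrot]
  simp only [count_flatten, map_replicate, sum_replicate, smul_eq_mul, p]

theorem card_image_rotate_range_minimalPeriod [DecidableEq α] (l : List α) :
    ((Finset.range (Function.minimalPeriod (fun x : List α => x.rotate 1) l)).image
      l.rotate).card = Function.minimalPeriod (fun x : List α => x.rotate 1) l := by
  rw [Finset.card_image_of_injOn, Finset.card_range]
  intro i hi j hj hij
  simp only [Finset.coe_range] at hi hj
  exact Function.iterate_injOn_Iio_minimalPeriod hi hj (by simpa only [iterate_rotate_one])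

end List

theorem stmt8_general (k l : ℕ) (hkl : Nat.Coprime k l)
    (w : List Bool) (hkcount : w.count true = k) (hlcount : w.count false = l) :
    ((Finset.range (k + l)).image (fun i => w.rotate i)).card = k + l := by
  set p := Function.minimalPeriod (fun x : List Bool => x.rotate 1) w
  have hlen : w.length = k + l := by rw [← w.count_true_add_count_false, hkcount, hlcount]
  have hquot : w.length / p = 1 := Nat.eq_one_of_dvd_coprimes hkl
    (hkcount ▸ w.length_div_minimalPeriod_rotate_one_dvd_count true)
    (hlcount ▸ w.length_div_minimalPeriod_rotate_one_dvd_count false)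
  have hp : p = k + l :=
    hlen ▸ Nat.eq_of_dvd_of_div_eq_one w.minimalPeriod_rotate_one_dvd_length hquot
  rw [← hp]
  exact w.card_image_rotate_range_minimalPeriod

/-- For coprime k, l > 0, any word with k letters a' (true) and l letters b' (false)
has exactly k + l distinct cyclic rotations: its cyclic equivalence class consists of
exactly k + l distinct words. -/
theorem stmt8 (k l : ℕ) (hk : 0 < k) (hl : 0 < l) (hkl : Nat.Coprime k l)
    (w : List Bool) (hkcount : w.count true = k) (hlcount : w.count false = l) :
    ((Finset.range (k + l)).image (fun i => w.rotate i)).card = k + l :=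
  stmt8_general k l hkl w hkcount hlcount
end
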